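/- (Forward stretching) Let x, y ∈ J(𝓕). If y and x have the same external address (i.e. the same second coordinate in ℤ^ℕ) and T(y) > T(x), then for every n ≥ 1, T(𝓕^n(y)) ≥ F^n(T(y) − T(x)). -/

import Mathlib

/-!
Points with the same external address are translated by the same amount `2π|s₀|` at each step,
so the difference of their `T`-coordinates evolves as `F(b) - F(a)`. Since `F` is superadditive
on `[0, ∞)` and `T(𝓕ⁿ(x)) ≥ 0` along the orbit of `x`, this difference is at least `F` of the
previous difference, hence at least `Fⁿ(T(y) - T(x))` after `n` steps.
-/

open Topology Filter Set

/-- The model map `F(t) = e^t - 1`. -/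
noncomputable def Fmap (t : ℝ) : ℝ := Real.exp t - 1

/-- The model `𝓕(t, s) = (F(t) - 2π|s₀|, σ(s))` where `σ` is the shift. -/
noncomputable def calF : ℝ × (ℕ → ℤ) → ℝ × (ℕ → ℤ) :=
  fun x => (Fmap x.1 - 2 * Real.pi * |(x.2 0 : ℝ)|, fun n => x.2 (n + 1))

/-- The Julia set of the model map. -/
def JcalF : Set (ℝ × (ℕ → ℤ)) :=
  {x | ∀ n : ℕ, 0 ≤ (calF^[n] x).1}

lemma Fmap_nonneg {t : ℝ} (ht : 0 ≤ t) : 0 ≤ Fmap t :=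
  sub_nonneg.2 (Real.one_le_exp ht)

lemma Fmap_monotone : Monotone Fmap :=
  fun _ _ h => sub_le_sub_right (Real.exp_le_exp.2 h) 1

lemma Fmap_add_Fmap_le {a b : ℝ} (ha : 0 ≤ a) (hb : 0 ≤ b) :
    Fmap a + Fmap b ≤ Fmap (a + b) := by
  have hprod := mul_nonneg (Fmap_nonneg ha) (Fmap_nonneg hb)
  simp only [Fmap, Real.exp_add] at *
  linarith

lemma Fmap_iterate_nonneg {t : ℝ} (ht : 0 ≤ t) (n : ℕ) : 0 ≤ Fmap^[n] t := by
  induction n with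
  | zero => exact ht
  | succ n ih => rw [Function.iterate_succ_apply']; exact Fmap_nonneg ih

lemma calF_iterate_snd_eq {x y : ℝ × (ℕ → ℤ)} (hs : y.2 = x.2) (n : ℕ) :
    (calF^[n] y).2 = (calF^[n] x).2 := by
  induction n with
  | zero => exact hs
  | succ n ih => simp only [Function.iterate_succ_apply', calF, ih]

lemma calF_fst_sub_calF_fst {x y : ℝ × (ℕ → ℤ)} (hs : y.2 = x.2) :
    (calF y).1 - (calF x).1 = Fmap y.1 - Fmap x.1 := by
  simp only [calF, hs]
  ring

theorem Fmap_iterate_sub_le_calF_iterate_sub {x y : ℝ × (ℕ → ℤ)} (hx : x ∈ JcalF)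
    (hs : y.2 = x.2) (hxy : x.1 ≤ y.1) (n : ℕ) :
    Fmap^[n] (y.1 - x.1) ≤ (calF^[n] y).1 - (calF^[n] x).1 := by
  induction n with
  | zero => simp
  | succ n ih =>
    set a := (calF^[n] x).1
    set b := (calF^[n] y).1
    have ha : 0 ≤ a := hx n
    have hba : 0 ≤ b - a := (Fmap_iterate_nonneg (sub_nonneg.2 hxy) n).trans ih
    have hsuper : Fmap a + Fmap (b - a) ≤ Fmap b := by
      simpa only [add_sub_cancel] using Fmap_add_Fmap_le ha hba
    simp only [Function.iterate_succ_apply']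
    rw [calF_fst_sub_calF_fst (calF_iterate_snd_eq hs n)]
    calc Fmap (Fmap^[n] (y.1 - x.1)) ≤ Fmap (b - a) := Fmap_monotone ih
      _ ≤ Fmap b - Fmap a := by linarith

theorem stmt6_general (x y : ℝ × (ℕ → ℤ)) (hx : x ∈ JcalF)
    (hs : y.2 = x.2) (ht : x.1 < y.1) :
    ∀ n : ℕ, 1 ≤ n → Fmap^[n] (y.1 - x.1) ≤ (calF^[n] y).1 := by
  intro n _
  have hdiff := Fmap_iterate_sub_le_calF_iterate_sub hx hs ht.le n
  linarith [hx n]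

/-- Forward stretching. -/
theorem stmt6 (x y : ℝ × (ℕ → ℤ)) (hx : x ∈ JcalF) (hy : y ∈ JcalF)
    (hs : y.2 = x.2) (ht : x.1 < y.1) :
    ∀ n : ℕ, 1 ≤ n → Fmap^[n] (y.1 - x.1) ≤ (calF^[n] y).1 :=
  stmt6_general x y hx hs ht
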